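/- arXiv:2407.11897 — 6 statements merged into one kernel-verified Lean document; each statement's English description precedes it below -/
import Mathlib

section
/- Let Ω be a relatively compact open subset of a metric space X (say ℝ^n or a manifold with countable basis). If there exists an exhaustion of Ω by compact sets (K_j)_{j∈ℕ} with K_j ⊆ interior(K_{j+1}), ⋃_j K_j = Ω, and Ω \ K_j connected for every j, then the boundary ∂Ω = closure(Ω) \ Ω is connected. -/
/-- If a relatively compact open set Ω admits an exhaustion by compacts with
connected complements, then its boundary is connected. -/
theorem stmt_2 {X : Type*} [MetricSpace X] (Ω : Set X) (hΩo : IsOpen Ω)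
    (hΩne : Ω.Nonempty) (hΩc : IsCompact (closure Ω)) (K : ℕ → Set X)
    (hKc : ∀ j, IsCompact (K j)) (hKmono : ∀ j, K j ⊆ interior (K (j + 1)))
    (hKcover : ⋃ j, K j = Ω) (hconn : ∀ j, IsConnected (Ω \ K j)) :
    IsConnected (closure Ω \ Ω) := by
  set C : ℕ → Set X := fun j => closure (Ω \ K j) with hC
  have hKsub : ∀ j, K j ⊆ Ω := fun j => hKcover ▸ Set.subset_iUnion K j
  have hCsub : ∀ j, C j ⊆ closure Ω := fun j => closure_mono Set.diff_subset
  have hCcl : ∀ j, IsClosed (C j) := fun j => isClosed_closure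
  have hCcpt : ∀ j, IsCompact (C j) := fun j =>
    hΩc.of_isClosed_subset (hCcl j) (hCsub j)
  have hCne : ∀ j, (C j).Nonempty := fun j =>
    (hconn j).nonempty.mono subset_closure
  have hCmono : ∀ {i j : ℕ}, i ≤ j → C j ⊆ C i := by
    intro i j hij
    apply closure_mono
    apply Set.diff_subset_diff_right
    induction hij with
    | refl => exact subset_rfl
    | step _ ih => exact (ih.trans ((hKmono _).trans interior_subset))
  have hdir : Directed (· ⊇ ·) C := fun i j =>
    ⟨max i j, hCmono (le_max_left i j), hCmono (le_max_right i j)⟩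
  -- key equality
  have hEq : (⋂ j, C j) = closure Ω \ Ω := by
    apply Set.Subset.antisymm
    · intro x hx
      simp only [Set.mem_iInter] at hx
      refine ⟨hCsub 0 (hx 0), fun hxΩ => ?_⟩
      obtain ⟨n, hn⟩ : ∃ n, x ∈ K n := by
        have := hKcover ▸ hxΩ
        simpa using this
      have hxint : x ∈ interior (K (n + 1)) := hKmono n hn
      have := hx (n + 1)
      rw [mem_closure_iff] at this
      obtain ⟨y, hy1, hy2⟩ := this _ isOpen_interior hxint
      exact hy2.2 (interior_subset hy1)
    · intro x hx
      simp only [Set.mem_iInter]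
      intro j
      rw [hC, mem_closure_iff]
      intro o ho hxo
      have hxK : x ∉ K j := fun h => hx.2 (hKsub j h)
      have ho' : IsOpen (o \ K j) := ho.sdiff (hKc j).isClosed
      have hxo' : x ∈ o \ K j := ⟨hxo, hxK⟩
      obtain ⟨y, hy1, hy2⟩ := mem_closure_iff.mp hx.1 _ ho' hxo'
      exact ⟨y, hy1.1, hy2, hy1.2⟩
  rw [← hEq]
  constructor
  · exact IsCompact.nonempty_iInter_of_directed_nonempty_isCompact_isClosed
      C hdir hCne hCcpt hCcl
  · -- preconnectedness
    rintro u v hu hv hsub ⟨x, hxC, hxu⟩ ⟨y, hyC, hyv⟩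
    by_contra hempty
    rw [Set.not_nonempty_iff_eq_empty] at hempty
    set A : Set X := (⋂ j, C j) ∩ u with hA
    set B : Set X := (⋂ j, C j) ∩ v with hB
    have hAcl : A = (⋂ j, C j) \ v := by
      apply Set.Subset.antisymm
      · rintro z ⟨hz, hzu⟩
        refine ⟨hz, fun hzv => ?_⟩
        have : z ∈ (⋂ j, C j) ∩ (u ∩ v) := ⟨hz, hzu, hzv⟩
        rw [hempty] at this; exact this
      · rintro z ⟨hz, hzv⟩
        rcases hsub hz with h | h
        · exact ⟨hz, h⟩
        · exact absurd h hzv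
    have hBcl : B = (⋂ j, C j) \ u := by
      apply Set.Subset.antisymm
      · rintro z ⟨hz, hzv⟩
        refine ⟨hz, fun hzu => ?_⟩
        have : z ∈ (⋂ j, C j) ∩ (u ∩ v) := ⟨hz, hzu, hzv⟩
        rw [hempty] at this; exact this
      · rintro z ⟨hz, hzu⟩
        rcases hsub hz with h | h
        · exact absurd h hzu
        · exact ⟨hz, h⟩
    have hCinter_cpt : IsCompact (⋂ j, C j) :=
      (hCcpt 0).of_isClosed_subset (isClosed_iInter hCcl) (Set.iInter_subset C 0)
    have hAcpt : IsCompact A := by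
      rw [hAcl]
      exact hCinter_cpt.of_isClosed_subset
        ((isClosed_iInter hCcl).sdiff hv) Set.diff_subset
    have hBcpt : IsCompact B := by
      rw [hBcl]
      exact hCinter_cpt.of_isClosed_subset
        ((isClosed_iInter hCcl).sdiff hu) Set.diff_subset
    have hABdisj : Disjoint A B := by
      rw [Set.disjoint_left]
      rintro z ⟨hz, hzu⟩ ⟨_, hzv⟩
      have hmem : z ∈ (⋂ j, C j) ∩ (u ∩ v) := ⟨hz, hzu, hzv⟩
      rw [hempty] at hmem; exact hmem
    obtain ⟨U, V, hUo, hVo, hAU, hBV, hUV⟩ :=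
      SeparatedNhds.of_isCompact_isCompact hAcpt hBcpt hABdisj
    -- some C N ⊆ U ∪ V
    have hexN : ∃ N, C N ⊆ U ∪ V := by
      by_contra hno
      push_neg at hno
      have hDne : ∀ j, (C j \ (U ∪ V)).Nonempty := by
        intro j
        obtain ⟨z, hz, hz'⟩ := Set.not_subset.mp (hno j)
        exact ⟨z, hz, hz'⟩
      have hDdir : Directed (· ⊇ ·) (fun j => C j \ (U ∪ V)) := fun i j => by
        obtain ⟨k, hk1, hk2⟩ := hdir i j
        exact ⟨k, Set.diff_subset_diff_left hk1, Set.diff_subset_diff_left hk2⟩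
      have := IsCompact.nonempty_iInter_of_directed_nonempty_isCompact_isClosed
        (fun j => C j \ (U ∪ V)) hDdir hDne
        (fun j => (hCcpt j).of_isClosed_subset ((hCcl j).sdiff (hUo.union hVo))
          Set.diff_subset)
        (fun j => (hCcl j).sdiff (hUo.union hVo))
      obtain ⟨z, hz⟩ := this
      simp only [Set.mem_iInter, Set.mem_diff] at hz
      have hzC : z ∈ ⋂ j, C j := Set.mem_iInter.mpr fun j => (hz j).1
      rcases hsub hzC with h | h
      · exact (hz 0).2 (Or.inl (hAU ⟨hzC, h⟩))
      · exact (hz 0).2 (Or.inr (hBV ⟨hzC, h⟩))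
    obtain ⟨N, hN⟩ := hexN
    have hCNconn : IsPreconnected (C N) := (hconn N).isPreconnected.closure
    have hxCN : x ∈ C N := Set.mem_iInter.mp hxC N
    have hyCN : y ∈ C N := Set.mem_iInter.mp hyC N
    have hxU : x ∈ U := hAU ⟨hxC, hxu⟩
    have hyV : y ∈ V := hBV ⟨hyC, hyv⟩
    obtain ⟨z, _, hzU, hzV⟩ := hCNconn U V hUo hVo hN ⟨x, hxCN, hxU⟩ ⟨y, hyCN, hyV⟩
    exact hUV.ne_of_mem hzU hzV rfl
end

section
/- Let Ω be a relatively compact open connected subset of a metric space X, and suppose (K_j) is an exhaustion of Ω by compacts with Ω \ K_j connected for all j. Then the sets closure(Ω) \ interior(K_j) form a decreasing sequence of continua whose intersection equals the frontier of Ω. -/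
/-- For a relatively compact open connected Ω with an exhaustion by compacts with
connected complements, the sets `closure Ω \ interior (K j)` form a decreasing
sequence of continua whose intersection is the frontier of Ω. -/
theorem stmt_3 {X : Type*} [MetricSpace X] (Ω : Set X) (hΩo : IsOpen Ω)
    (hΩconn : IsConnected Ω) (hΩc : IsCompact (closure Ω)) (K : ℕ → Set X)
    (hKsub : ∀ j, K j ⊆ Ω) (hKc : ∀ j, IsCompact (K j))
    (hKmono : ∀ j, K j ⊆ interior (K (j + 1))) (hKcover : ⋃ j, K j = Ω)
    (hconn : ∀ j, IsConnected (Ω \ K j)) :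
    (∀ j, IsCompact (closure Ω \ interior (K j)) ∧
        IsConnected (closure Ω \ interior (K j))) ∧
    (Antitone fun j => closure Ω \ interior (K j)) ∧
    (⋂ j, closure Ω \ interior (K j)) = frontier Ω := by
  have key : ∀ j, closure Ω \ interior (K j) = closure (Ω \ K j) := by
    intro j
    apply Set.Subset.antisymm
    · rintro x ⟨hx1, hx2⟩
      rw [mem_closure_iff] at hx1 ⊢
      intro U hU hxU
      by_cases hxΩ : x ∈ Ω
      · by_contra h
        rw [Set.not_nonempty_iff_eq_empty] at h
        have hsub : U ∩ Ω ⊆ K j := by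
          intro y hy
          by_contra hyK
          exact (Set.eq_empty_iff_forall_notMem.mp h y) ⟨hy.1, hy.2, hyK⟩
        exact hx2 (mem_interior.mpr ⟨U ∩ Ω, hsub, hU.inter hΩo, ⟨hxU, hxΩ⟩⟩)
      · have hxK : x ∉ K j := fun h => hxΩ (hKsub j h)
        obtain ⟨y, hy1, hy2⟩ := hx1 (U ∩ (K j)ᶜ)
          (hU.inter (hKc j).isClosed.isOpen_compl) ⟨hxU, hxK⟩
        exact ⟨y, hy1.1, hy2, hy1.2⟩
    · intro x hx
      refine ⟨closure_mono Set.diff_subset hx, ?_⟩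
      have : x ∈ closure (K j)ᶜ := closure_mono (fun y hy => hy.2) hx
      rwa [closure_compl] at this
  have Kmono : Monotone K :=
    monotone_nat_of_le_succ fun j => (hKmono j).trans interior_subset
  refine ⟨fun j => ⟨hΩc.diff isOpen_interior, by rw [key j]; exact (hconn j).closure⟩,
    fun i j hij => Set.diff_subset_diff_right (interior_mono (Kmono hij)), ?_⟩
  have hU : (⋃ j, interior (K j)) = Ω := by
    apply Set.Subset.antisymm
    · exact Set.iUnion_subset fun j => interior_subset.trans (hKsub j)
    · rw [← hKcover]
      exact Set.iUnion_subset fun j => (hKmono j).trans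
        (Set.subset_iUnion (fun i => interior (K i)) (j + 1))
  rw [← Set.diff_iUnion, hU, frontier, hΩo.interior_eq]
end

section
/- For a bounded domain Ω in ℝ^n, the complement ℝ^n \ Ω is connected if and only if the boundary ∂Ω is connected. -/
/-!
`ℝⁿ` is unicoherent: if it is the union of two closed connected sets `A` and `B`, then `A ∩ B` is
connected. Indeed, if `A ∩ B` split into disjoint closed pieces `F₁`, `F₂`, take an Urysohn
function `f` equal to `0` on `F₁` and `1` on `F₂`. The map to `ℝ / 2ℤ` equal to `f` on `A` and to
`-f` on `B` is well defined and continuous because `1 ≡ -1`, so it lifts to a real function `h`,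
`ℝⁿ` being simply connected. Then `h - f` is constant on `A` and `h + f` on `B`, which is absurd
at a point of `F₁` and a point of `F₂`. With `A = closure Ω` and `B = Ωᶜ` this gives one
direction. Conversely, every connected component of `Ωᶜ` meets `∂Ω`, otherwise it would be clopen
in `ℝⁿ`.
-/

open Set

variable {X : Type*} [TopologicalSpace X]

theorem IsPreconnected.eq_of_forall_coe_addCircle_eq_zero {p : ℝ} {S : Set X}
    (hS : IsPreconnected S) {φ : X → ℝ} (hφ : ContinuousOn φ S)
    (hφS : ∀ x ∈ S, (φ x : AddCircle p) = 0) {x y : X} (hx : x ∈ S) (hy : y ∈ S) :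
    φ x = φ y :=
  hS.constant_of_mapsTo (T := AddSubgroup.zmultiples p)
    (isDiscrete_iff_discreteTopology.mpr
      (inferInstanceAs (DiscreteTopology (AddSubgroup.zmultiples p)))) hφ
    (fun z hz => (QuotientAddGroup.eq_zero_iff _).mp (hφS z hz)) hx hy

theorem exists_continuous_lift_addCircle [SimplyConnectedSpace X] [LocallyPathConnectedSpace X]
    {p : ℝ} (g : C(X, AddCircle p)) : ∃ h : C(X, ℝ), ∀ x, (h x : AddCircle p) = g x := by
  obtain ⟨x₀⟩ : Nonempty X := inferInstance
  obtain ⟨e₀, he₀⟩ := QuotientAddGroup.mk_surjective (g x₀)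
  obtain ⟨h, -, hh⟩ :=
    ((AddCircle.isCoveringMap_coe p).existsUnique_continuousMap_lifts g x₀ e₀ he₀).exists
  exact ⟨h, congrFun hh⟩

theorem frontier_subset_inter_of_union_eq_univ {A B : Set X} (hA : IsClosed A)
    (hB : IsClosed B) (hAB : A ∪ B = univ) : frontier A ⊆ A ∩ B := by
  intro x hx
  refine ⟨hA.frontier_subset hx, by_contra fun hxB => hx.2 ?_⟩
  exact interior_maximal (compl_subset_iff_union.mpr (union_comm A B ▸ hAB))
    hB.isOpen_compl hxB

theorem IsPreconnected.inter_of_isClosed_of_union_eq_univ [NormalSpace X]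
    [SimplyConnectedSpace X] [LocallyPathConnectedSpace X] {A B : Set X}
    (hA : IsPreconnected A) (hB : IsPreconnected B) (hAc : IsClosed A) (hBc : IsClosed B)
    (hAB : A ∪ B = univ) : IsPreconnected (A ∩ B) := by
  classical
  rw [isPreconnected_iff_subset_of_fully_disjoint_closed (hAc.inter hBc)]
  intro u v hu hv huv hdisj
  by_contra! ⟨hnu, hnv⟩
  obtain ⟨x₁, hx₁, hx₁v⟩ := not_subset.mp hnv
  obtain ⟨x₂, hx₂, hx₂u⟩ := not_subset.mp hnu
  obtain ⟨f, hf0, hf1, -⟩ := exists_continuous_zero_one_of_isClosed hu hv hdisj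
  have hf01 : ∀ x ∈ A ∩ B, ((f x : ℝ) : AddCircle (2 : ℝ)) = ↑(-f x) := by
    intro x hx
    rcases huv hx with hxu | hxv
    · simp [hf0 hxu]
    · rw [hf1 hxv, QuotientAddGroup.eq_iff_sub_mem]; norm_num
  let g : C(X, AddCircle (2 : ℝ)) :=
    ⟨fun x => if x ∈ A then ↑(f x) else ↑(-f x), by
      refine Continuous.if (fun x hx => hf01 x ?_) (by fun_prop) (by fun_prop)
      exact frontier_subset_inter_of_union_eq_univ hAc hBc hAB hx⟩
  obtain ⟨h, hh⟩ := exists_continuous_lift_addCircle g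
  have hA0 : ∀ x ∈ A, ((h x - f x : ℝ) : AddCircle (2 : ℝ)) = 0 := by
    intro x hx
    simp [hh, g, hx]
  have hgB : ∀ x ∈ B, g x = ↑(-f x) := by
    intro x hx
    by_cases hxA : x ∈ A
    · simp only [g, ContinuousMap.coe_mk, if_pos hxA]
      exact hf01 x ⟨hxA, hx⟩
    · simp only [g, ContinuousMap.coe_mk, if_neg hxA]
  have hB0 : ∀ x ∈ B, ((h x + f x : ℝ) : AddCircle (2 : ℝ)) = 0 := by
    intro x hx
    rw [QuotientAddGroup.mk_add, hh, hgB x hx, ← QuotientAddGroup.mk_add, neg_add_cancel,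
      QuotientAddGroup.mk_zero]
  have eA := hA.eq_of_forall_coe_addCircle_eq_zero (by fun_prop) hA0 hx₁.1 hx₂.1
  have eB := hB.eq_of_forall_coe_addCircle_eq_zero (by fun_prop) hB0 hx₁.2 hx₂.2
  simp only [hf0 ((huv hx₁).resolve_right hx₁v), hf1 ((huv hx₂).resolve_left hx₂u),
    Pi.zero_apply, Pi.one_apply] at eA eB
  linarith

theorem connectedComponentIn_compl_inter_frontier_nonempty [PreconnectedSpace X]
    [LocallyConnectedSpace X] {U : Set X} (hU : IsOpen U) (hne : U.Nonempty) {y : X}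
    (hy : y ∈ Uᶜ) : (connectedComponentIn Uᶜ y ∩ frontier U).Nonempty := by
  set C := connectedComponentIn Uᶜ y
  by_contra! hC
  have hCV : C ⊆ (closure U)ᶜ := fun x hx hxU =>
    hC.subset ⟨hx, hU.frontier_eq ▸ ⟨hxU, connectedComponentIn_subset _ _ hx⟩⟩
  have hCeq : C = connectedComponentIn (closure U)ᶜ y :=
    (isPreconnected_connectedComponentIn.subset_connectedComponentIn
      (mem_connectedComponentIn hy) hCV).antisymm
      (connectedComponentIn_mono _ (compl_subset_compl.mpr subset_closure))
  have hCopen : IsOpen C := hCeq ▸ isClosed_closure.isOpen_compl.connectedComponentIn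
  have hCclosed : IsClosed C := closure_subset_iff_isClosed.mp <|
    isPreconnected_connectedComponentIn.closure.subset_connectedComponentIn
      (subset_closure (mem_connectedComponentIn hy))
      (closure_minimal (connectedComponentIn_subset _ _) hU.isClosed_compl)
  have hyC : y ∈ C := mem_connectedComponentIn hy
  rcases isClopen_iff.mp ⟨hCclosed, hCopen⟩ with h | h
  · exact (h ▸ hyC : y ∈ (∅ : Set X))
  · obtain ⟨z, hz⟩ := hne
    exact connectedComponentIn_subset Uᶜ y (h ▸ mem_univ z : z ∈ C) hz

theorem IsOpen.isConnected_frontier_of_isConnected_compl [NormalSpace X]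
    [SimplyConnectedSpace X] [LocallyPathConnectedSpace X] {U : Set X} (hU : IsOpen U)
    (hUconn : IsConnected U) (hUc : IsConnected Uᶜ) : IsConnected (frontier U) := by
  refine ⟨nonempty_frontier_iff.mpr ⟨hUconn.nonempty, fun h => ?_⟩, ?_⟩
  · simpa [h] using hUc.nonempty
  · rw [hU.frontier_eq, sdiff_eq]
    refine hUconn.isPreconnected.closure.inter_of_isClosed_of_union_eq_univ hUc.isPreconnected
      isClosed_closure hU.isClosed_compl ?_
    exact eq_univ_of_univ_subset (union_compl_self U ▸ union_subset_union_left _ subset_closure)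

theorem IsOpen.isConnected_compl_of_isConnected_frontier [PreconnectedSpace X]
    [LocallyConnectedSpace X] {U : Set X} (hU : IsOpen U) (hne : U.Nonempty)
    (hfr : IsConnected (frontier U)) : IsConnected Uᶜ := by
  have hfrU : frontier U ⊆ Uᶜ := fun x hx => (hU.frontier_eq ▸ hx).2
  obtain ⟨x₀, hx₀⟩ := hfr.nonempty
  refine ⟨⟨x₀, hfrU hx₀⟩, isPreconnected_of_forall x₀ fun y hy => ?_⟩
  obtain ⟨p, hpC, hpU⟩ := connectedComponentIn_compl_inter_frontier_nonempty hU hne hy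
  exact ⟨frontier U ∪ connectedComponentIn Uᶜ y,
    union_subset hfrU (connectedComponentIn_subset _ _), Or.inl hx₀,
    Or.inr (mem_connectedComponentIn hy),
    hfr.isPreconnected.union p hpU hpC isPreconnected_connectedComponentIn⟩

theorem stmt_4_general {n : ℕ} (Ω : Set (EuclideanSpace ℝ (Fin n))) (hΩo : IsOpen Ω)
    (hΩconn : IsConnected Ω) :
    IsConnected Ωᶜ ↔ IsConnected (frontier Ω) :=
  ⟨hΩo.isConnected_frontier_of_isConnected_compl hΩconn,
    hΩo.isConnected_compl_of_isConnected_frontier hΩconn.nonempty⟩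

/-- For a bounded domain Ω in ℝⁿ, the complement is connected iff the boundary
is connected. -/
theorem stmt_4 {n : ℕ} (Ω : Set (EuclideanSpace ℝ (Fin n))) (hΩo : IsOpen Ω)
    (hΩne : Ω.Nonempty) (hΩconn : IsConnected Ω)
    (hΩb : Bornology.IsBounded Ω) :
    IsConnected Ωᶜ ↔ IsConnected (frontier Ω) :=
  stmt_4_general Ω hΩo hΩconn
end

section
/- Let Ω be a bounded domain in ℝ^n admitting a continuous proper exhaustion function φ: Ω → [0,∞) such that every superlevel set φ^{-1}((t,∞)) is connected for t ≥ 0. Then the boundary ∂Ω is connected. -/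
/-- The intersection of a decreasing sequence of nonempty compact connected closed
sets in a Hausdorff space is connected. -/
lemma stmt_6_aux {X : Type*} [TopologicalSpace X] [T2Space X] (K : ℕ → Set X)
    (hd : ∀ i, K (i + 1) ⊆ K i) (hne : ∀ i, (K i).Nonempty)
    (hc : ∀ i, IsCompact (K i)) (hcl : ∀ i, IsClosed (K i))
    (hconn : ∀ i, IsPreconnected (K i)) : IsConnected (⋂ i, K i) := by
  have hAcl : IsClosed (⋂ i, K i) := isClosed_iInter hcl
  constructor
  · exact IsCompact.nonempty_iInter_of_sequence_nonempty_isCompact_isClosed K hd hne (hc 0) hcl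
  · rw [isPreconnected_iff_subset_of_fully_disjoint_closed hAcl]
    intro u v hu hv hsuv huv
    set A := ⋂ i, K i with hA
    have hAc : IsCompact A := (hc 0).of_isClosed_subset hAcl (Set.iInter_subset K 0)
    set B := A ∩ u with hB
    set C := A ∩ v with hC
    rcases B.eq_empty_or_nonempty with hBe | hBne
    · right
      intro x hx
      rcases hsuv hx with h | h
      · exact absurd (Set.mem_inter hx h) (fun hm => Set.eq_empty_iff_forall_notMem.1 hBe x hm)
      · exact h
    rcases C.eq_empty_or_nonempty with hCe | hCne
    · left
      intro x hx
      rcases hsuv hx with h | h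
      · exact h
      · exact absurd (Set.mem_inter hx h) (fun hm => Set.eq_empty_iff_forall_notMem.1 hCe x hm)
    exfalso
    have hBc : IsCompact B := hAc.inter_right hu
    have hCc : IsCompact C := hAc.inter_right hv
    have hBC : Disjoint B C :=
      Set.disjoint_of_subset Set.inter_subset_right Set.inter_subset_right huv
    obtain ⟨U, V, hUo, hVo, hBU, hCV, hUV⟩ := SeparatedNhds.of_isCompact_isCompact hBc hCc hBC
    -- some K N is contained in U ∪ V
    have hAsub : A ⊆ U ∪ V := by
      intro x hx
      rcases hsuv hx with h | h
      · exact Or.inl (hBU ⟨hx, h⟩)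
      · exact Or.inr (hCV ⟨hx, h⟩)
    have hexN : ∃ N, K N \ (U ∪ V) = ∅ := by
      by_contra h
      push_neg at h
      have h' : ∀ i, (K i \ (U ∪ V)).Nonempty := h
      have := IsCompact.nonempty_iInter_of_sequence_nonempty_isCompact_isClosed
        (fun i => K i \ (U ∪ V)) (fun i => Set.diff_subset_diff_left (hd i)) h'
        ((hc 0).diff (hUo.union hVo)) (fun i => (hcl i).sdiff (hUo.union hVo))
      rcases this with ⟨x, hx⟩
      simp only [Set.mem_iInter, Set.mem_diff] at hx
      have hxA : x ∈ A := Set.mem_iInter.2 fun i => (hx i).1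
      exact (hx 0).2 (hAsub hxA)
    obtain ⟨N, hN⟩ := hexN
    have hKN : K N ⊆ U ∪ V := by
      intro x hx
      by_contra hxc
      exact (Set.eq_empty_iff_forall_notMem.1 hN x) ⟨hx, hxc⟩
    have hAK : A ⊆ K N := Set.iInter_subset K N
    have hU' : (K N ∩ U).Nonempty := by
      rcases hBne with ⟨b, hb⟩
      exact ⟨b, hAK hb.1, hBU hb⟩
    have hV' : (K N ∩ V).Nonempty := by
      rcases hCne with ⟨c, hc'⟩
      exact ⟨c, hAK hc'.1, hCV hc'⟩
    rcases (hconn N) U V hUo hVo hKN hU' hV' with ⟨x, _, hxU, hxV⟩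
    exact Set.disjoint_left.1 hUV hxU hxV

/-- A bounded domain in ℝⁿ admitting a continuous proper nonnegative exhaustion
function with connected superlevel sets has connected boundary. -/
theorem stmt_6 {n : ℕ} (Ω : Set (EuclideanSpace ℝ (Fin n))) (hΩo : IsOpen Ω)
    (hΩne : Ω.Nonempty) (hΩconn : IsConnected Ω) (hΩb : Bornology.IsBounded Ω)
    (φ : EuclideanSpace ℝ (Fin n) → ℝ) (hφc : ContinuousOn φ Ω)
    (hφ0 : ∀ x ∈ Ω, 0 ≤ φ x)
    (hφproper : ∀ t : ℝ, IsCompact {x ∈ Ω | φ x ≤ t})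
    (hsup : ∀ t : ℝ, 0 ≤ t → IsConnected {x ∈ Ω | t < φ x}) :
    IsConnected (frontier Ω) := by
  -- superlevel sets and their closures
  set S : ℕ → Set (EuclideanSpace ℝ (Fin n)) := fun m => {x ∈ Ω | (m : ℝ) < φ x} with hS
  set K : ℕ → Set (EuclideanSpace ℝ (Fin n)) := fun m => closure (S m) with hK
  have hSconn : ∀ m, IsConnected (S m) := fun m => hsup (m : ℝ) (Nat.cast_nonneg m)
  have hKconn : ∀ m, IsConnected (K m) := fun m => (hSconn m).closure
  have hKcl : ∀ m, IsClosed (K m) := fun m => isClosed_closure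
  have hKsub : ∀ m, K m ⊆ closure Ω := fun m =>
    closure_mono (fun x hx => hx.1)
  have hKc : ∀ m, IsCompact (K m) := fun m =>
    hΩb.isCompact_closure.of_isClosed_subset (hKcl m) (hKsub m)
  have hKd : ∀ m, K (m + 1) ⊆ K m := by
    intro m
    apply closure_mono
    intro x hx
    exact ⟨hx.1, lt_of_le_of_lt (by exact_mod_cast Nat.le_succ m) hx.2⟩
  -- the key identity: frontier Ω = ⋂ m, K m
  have hfr : frontier Ω = ⋂ m, K m := by
    apply Set.Subset.antisymm
    · -- frontier ⊆ ⋂ K m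
      intro x hx
      rw [hΩo.frontier_eq] at hx
      obtain ⟨hxcl, hxΩ⟩ := hx
      refine Set.mem_iInter.2 fun m => ?_
      rw [mem_closure_iff]
      intro U hUo hxU
      by_contra hcon
      -- then U ∩ Ω ⊆ {φ ≤ m} ∩ Ω, a compact (closed) set
      have hsub : U ∩ Ω ⊆ {y ∈ Ω | φ y ≤ (m : ℝ)} := by
        intro y hy
        refine ⟨hy.2, ?_⟩
        by_contra hlt
        push_neg at hlt
        exact hcon ⟨y, hy.1, hy.2, hlt⟩
      -- x is in the closure of U ∩ Ω
      have hxclU : x ∈ closure (U ∩ Ω) := by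
        rw [mem_closure_iff]
        intro V hVo hxV
        rw [mem_closure_iff] at hxcl
        rcases hxcl (V ∩ U) (hVo.inter hUo) ⟨hxV, hxU⟩ with ⟨y, ⟨hyV, hyU⟩, hyΩ⟩
        exact ⟨y, hyV, hyU, hyΩ⟩
      have hCcl : IsClosed {y ∈ Ω | φ y ≤ (m : ℝ)} := (hφproper (m : ℝ)).isClosed
      have : x ∈ {y ∈ Ω | φ y ≤ (m : ℝ)} :=
        hCcl.closure_subset ((closure_mono hsub) hxclU)
      exact hxΩ this.1
    · -- ⋂ K m ⊆ frontier
      intro x hx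
      rw [Set.mem_iInter] at hx
      rw [hΩo.frontier_eq]
      have hxcl : x ∈ closure Ω := hKsub 0 (hx 0)
      refine ⟨hxcl, fun hxΩ => ?_⟩
      -- φ is continuous at x, pick m > φ x
      obtain ⟨m, hm⟩ := exists_nat_gt (φ x)
      have hcont : ContinuousAt φ x := hφc.continuousAt (hΩo.mem_nhds hxΩ)
      have hnhd : φ ⁻¹' Set.Iio (m : ℝ) ∈ nhds x := hcont.preimage_mem_nhds (Iio_mem_nhds hm)
      have := (mem_closure_iff_nhds.1 (hx m)) _ hnhd
      rcases this with ⟨y, hy1, hy2⟩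
      exact absurd hy2.2 (not_lt.2 (le_of_lt hy1))
  rw [hfr]
  exact stmt_6_aux K hKd (fun m => (hKconn m).nonempty) hKc hKcl
    (fun m => (hKconn m).isPreconnected)
end

section
/- Let Ω ⊆ ℝ^n (n ≥ 2) be a bounded, open, connected set whose complement ℝ^n \ Ω is connected. Then the reduced 0-th Čech (or singular) homology of ∂Ω vanishes, i.e., ∂Ω is connected. -/
open Set Metric Complex Real

namespace Stmt14Aux

noncomputable section

variable {E : Type*} [NormedAddCommGroup E] [NormedSpace ℝ E]

/-- Sum of arguments of quotients along a subdivision of the segment from `0` to `x`. -/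
def argSum (f : E → Circle) (N : ℕ) (x : E) : ℝ :=
  ∑ k ∈ Finset.range N,
    Complex.arg ((f ((((k : ℝ) + 1) / (N : ℝ)) • x) / f (((k : ℝ) / (N : ℝ)) • x) : Circle) : ℂ)

lemma exp_sum {ι : Type*} (s : Finset ι) (g : ι → ℝ) :
    Circle.exp (∑ i ∈ s, g i) = ∏ i ∈ s, Circle.exp (g i) := by
  classical
  induction s using Finset.induction with
  | empty => simp
  | insert _ _ h ih => rw [Finset.sum_insert h, Finset.prod_insert h, Circle.exp_add, ih]

lemma exp_argSum (f : E → Circle) {N : ℕ} (hN : N ≠ 0) (x : E) :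
    Circle.exp (argSum f N x) = f x / f 0 := by
  have : ∀ k : ℕ,
      Circle.exp (Complex.arg ((f ((((k : ℝ) + 1) / (N : ℝ)) • x) /
        f (((k : ℝ) / (N : ℝ)) • x) : Circle) : ℂ))
      = (fun k : ℕ => f (((k : ℝ) / (N : ℝ)) • x)) (k + 1) /
        (fun k : ℕ => f (((k : ℝ) / (N : ℝ)) • x)) k := by
    intro k
    have := Circle.exp_arg (f ((((k : ℝ) + 1) / (N : ℝ)) • x) / f (((k : ℝ) / (N : ℝ)) • x))
    simpa [Nat.cast_add, Nat.cast_one] using this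
  rw [argSum, exp_sum]
  calc (∏ k ∈ Finset.range N, Circle.exp (Complex.arg
        ((f ((((k : ℝ) + 1) / (N : ℝ)) • x) / f (((k : ℝ) / (N : ℝ)) • x) : Circle) : ℂ)))
      = ∏ k ∈ Finset.range N, ((fun k : ℕ => f (((k : ℝ) / (N : ℝ)) • x)) (k + 1) /
          (fun k : ℕ => f (((k : ℝ) / (N : ℝ)) • x)) k) := by
        exact Finset.prod_congr rfl fun k _ => this k
    _ = f (((N : ℝ) / (N : ℝ)) • x) / f ((((0 : ℕ) : ℝ) / (N : ℝ)) • x) :=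
        Finset.prod_range_div (fun k : ℕ => f (((k : ℝ) / (N : ℝ)) • x)) N
    _ = f x / f 0 := by
        rw [div_self (by exact_mod_cast hN : (N : ℝ) ≠ 0)]
        norm_num

lemma arg_mul_of_abs_add_lt {z w : ℂ} (hz : z ≠ 0) (hw : w ≠ 0)
    (h : |Complex.arg z + Complex.arg w| < π) :
    Complex.arg (z * w) = Complex.arg z + Complex.arg w := by
  have hA := Complex.arg_mul_coe_angle hz hw
  rw [← Real.Angle.coe_add] at hA
  obtain ⟨k, hk⟩ := Real.Angle.angle_eq_iff_two_pi_dvd_sub.1 hA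
  have h1 : |Complex.arg (z * w)| ≤ π := Complex.abs_arg_le_pi _
  have h2 : |Complex.arg (z * w) - (Complex.arg z + Complex.arg w)| < 2 * π := by
    calc |Complex.arg (z * w) - (Complex.arg z + Complex.arg w)|
        ≤ |Complex.arg (z * w)| + |Complex.arg z + Complex.arg w| := abs_sub _ _
      _ < π + π := by linarith
      _ = 2 * π := by ring
  rw [hk] at h2
  have hkabs : |(k : ℝ)| < 1 := by
    have h2π : (0 : ℝ) < 2 * π := by positivity
    rw [abs_mul, abs_of_pos h2π] at h2
    nlinarith [abs_nonneg (k : ℝ)]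
  have hk0 : k = 0 := by
    have h3 : |k| < 1 := by exact_mod_cast (by rwa [← Int.cast_abs] at hkabs : ((|k| : ℤ) : ℝ) < 1)
    have := abs_lt.mp h3
    omega
  rw [hk0, Int.cast_zero, mul_zero] at hk
  linarith [hk]


lemma re_pos_ne_zero {z : ℂ} (h : 0 < z.re) : z ≠ 0 := by
  intro h0; rw [h0] at h; simp at h

lemma abs_arg_lt_of_re_pos {z : ℂ} (h : 0 < z.re) : |Complex.arg z| < π / 2 :=
  Complex.abs_arg_lt_pi_div_two_iff.2 (Or.inl h)

/-- Telescoping sum of arguments, when all partial quotients stay in the right half plane. -/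
lemma arg_telescope (c : ℕ → Circle) (M : ℕ)
    (h1 : ∀ j ≤ M, 0 < ((c j / c 0 : Circle) : ℂ).re)
    (h2 : ∀ i < M, 0 < ((c (i + 1) / c i : Circle) : ℂ).re) :
    Complex.arg ((c M / c 0 : Circle) : ℂ)
      = ∑ i ∈ Finset.range M, Complex.arg ((c (i + 1) / c i : Circle) : ℂ) := by
  have key : ∀ m, m ≤ M → Complex.arg ((c m / c 0 : Circle) : ℂ)
      = ∑ i ∈ Finset.range m, Complex.arg ((c (i + 1) / c i : Circle) : ℂ) := by
    intro m
    induction m with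
    | zero => intro _; simp
    | succ m ih =>
      intro hm
      have hmM : m ≤ M := le_trans (Nat.le_succ m) hm
      have hz : 0 < ((c m / c 0 : Circle) : ℂ).re := h1 m hmM
      have hw : 0 < ((c (m + 1) / c m : Circle) : ℂ).re := h2 m hm
      have hmul : ((c (m + 1) / c 0 : Circle) : ℂ)
          = ((c (m + 1) / c m : Circle) : ℂ) * ((c m / c 0 : Circle) : ℂ) := by
        push_cast
        field_simp
      rw [Finset.sum_range_succ, ← ih hmM, hmul,
        arg_mul_of_abs_add_lt (re_pos_ne_zero hw) (re_pos_ne_zero hz) ?_, add_comm]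
      have a1 := abs_arg_lt_of_re_pos hz
      have a2 := abs_arg_lt_of_re_pos hw
      calc |Complex.arg ((c (m+1) / c m : Circle) : ℂ) + Complex.arg ((c m / c 0 : Circle) : ℂ)|
          ≤ |Complex.arg ((c (m+1) / c m : Circle) : ℂ)| +
            |Complex.arg ((c m / c 0 : Circle) : ℂ)| := abs_add_le _ _
        _ < π / 2 + π / 2 := by linarith
        _ = π := by ring
  exact key M le_rfl

lemma sum_range_mul_eq {β : Type*} [AddCommMonoid β] (g : ℕ → β) (N M : ℕ) :
    ∑ i ∈ Finset.range (N * M), g i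
      = ∑ k ∈ Finset.range N, ∑ j ∈ Finset.range M, g (k * M + j) := by
  induction N with
  | zero => simp
  | succ n ih =>
    rw [Nat.succ_mul, Finset.sum_range_add, ih, Finset.sum_range_succ]

/-- Goodness: all quotients of `f` along pairs of close points of the segment `[0, x]`
lie in the right half plane. -/
def Good (f : E → Circle) (N : ℕ) (x : E) : Prop :=
  ∀ s t : ℝ, s ∈ Icc (0 : ℝ) 1 → t ∈ Icc (0 : ℝ) 1 → |s - t| ≤ 1 / N →
    0 < ((f (s • x) / f (t • x) : Circle) : ℂ).re

lemma argSum_mul (f : E → Circle) {N M : ℕ} (hN : N ≠ 0) (hM : M ≠ 0) {x : E}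
    (hx : Good f N x) : argSum f (N * M) x = argSum f N x := by
  have hNR : (0 : ℝ) < N := by exact_mod_cast Nat.pos_of_ne_zero hN
  have hMR : (0 : ℝ) < M := by exact_mod_cast Nat.pos_of_ne_zero hM
  rw [argSum, argSum, sum_range_mul_eq]
  refine Finset.sum_congr rfl fun k hk => ?_
  rw [Finset.mem_range] at hk
  have hk1 : (k : ℝ) + 1 ≤ N := by exact_mod_cast hk
  set c : ℕ → Circle := fun j => f (((((k : ℝ) * M + j)) / ((N : ℝ) * M)) • x) with hc
  have mem01 : ∀ j : ℕ, j ≤ M → ((k : ℝ) * M + j) / ((N : ℝ) * M) ∈ Icc (0 : ℝ) 1 := by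
    intro j hj
    have h2 : (j : ℝ) ≤ M := by exact_mod_cast hj
    constructor
    · positivity
    · rw [div_le_one (by positivity)]
      nlinarith
  have hgap : ∀ j j' : ℕ, j ≤ M → j' ≤ M →
      |((k : ℝ) * M + j) / ((N : ℝ) * M) - ((k : ℝ) * M + j') / ((N : ℝ) * M)| ≤ 1 / N := by
    intro j j' hj hj'
    have hjR : (j : ℝ) ≤ M := by exact_mod_cast hj
    have hjR' : (j' : ℝ) ≤ M := by exact_mod_cast hj'
    have e : ((k : ℝ) * M + j) / ((N : ℝ) * M) - ((k : ℝ) * M + j') / ((N : ℝ) * M)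
        = ((j : ℝ) - j') / ((N : ℝ) * M) := by
      field_simp <;> ring
    rw [e, abs_div, abs_of_pos (by positivity : (0:ℝ) < (N : ℝ) * M)]
    have hjj : |(j : ℝ) - j'| ≤ M := by
      rw [abs_le]
      have h0 : (0 : ℝ) ≤ j := by positivity
      have h0' : (0 : ℝ) ≤ j' := by positivity
      constructor <;> linarith
    calc |(j : ℝ) - j'| / ((N : ℝ) * M) ≤ (M : ℝ) / ((N : ℝ) * M) := by gcongr
      _ = 1 / N := by field_simp <;> ring
  have h1 : ∀ j ≤ M, 0 < ((c j / c 0 : Circle) : ℂ).re := by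
    intro j hj
    exact hx _ _ (mem01 j hj) (by simpa using mem01 0 (Nat.zero_le M))
      (by simpa using hgap j 0 hj (Nat.zero_le M))
  have h2 : ∀ i < M, 0 < ((c (i + 1) / c i : Circle) : ℂ).re := by
    intro i hi
    have h := hx _ _ (mem01 (i + 1) hi) (mem01 i (le_of_lt hi))
      (hgap (i + 1) i hi (le_of_lt hi))
    simp only [hc]
    push_cast at h ⊢
    exact h
  have tele := arg_telescope c M h1 h2
  have e0 : ((k : ℝ) * M + (0 : ℕ)) / ((N : ℝ) * M) = (k : ℝ) / N := by
    push_cast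
    field_simp <;> ring
  have eM : ((k : ℝ) * M + (M : ℕ)) / ((N : ℝ) * M) = ((k : ℝ) + 1) / N := by
    field_simp
  rw [hc] at tele
  simp only at tele
  rw [e0, eM] at tele
  rw [tele]
  refine Finset.sum_congr rfl fun j hj => ?_
  have eA : (((k * M + j : ℕ) : ℝ) + 1) / ((N * M : ℕ) : ℝ)
      = ((k : ℝ) * M + ((j + 1 : ℕ) : ℝ)) / ((N : ℝ) * M) := by
    push_cast
    ring_nf
  have eB : ((k * M + j : ℕ) : ℝ) / ((N * M : ℕ) : ℝ)
      = ((k : ℝ) * M + (j : ℝ)) / ((N : ℝ) * M) := by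
    push_cast
    ring_nf
  rw [eA, eB]


lemma exists_good [ProperSpace E] {f : E → Circle} (hf : Continuous f) (x : E) :
    ∃ N : ℕ, N ≠ 0 ∧ ∀ y ∈ closedBall x 1, Good f N y := by
  have hK : IsCompact ((Icc (0 : ℝ) 1) ×ˢ closedBall x 1) :=
    isCompact_Icc.prod (isCompact_closedBall x 1)
  have hFc : Continuous fun p : ℝ × E => ((f (p.1 • p.2) : Circle) : ℂ) := by
    exact continuous_subtype_val.comp (hf.comp (continuous_fst.smul continuous_snd))
  have hUC := hK.uniformContinuousOn_of_continuous hFc.continuousOn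
  rw [Metric.uniformContinuousOn_iff] at hUC
  obtain ⟨δ, hδ, hδ'⟩ := hUC 1 one_pos
  obtain ⟨N, hNδ⟩ := exists_nat_one_div_lt hδ
  refine ⟨N + 1, Nat.succ_ne_zero N, fun y hy s t hs ht hst => ?_⟩
  have hsy : (s, y) ∈ (Icc (0 : ℝ) 1) ×ˢ closedBall x 1 := ⟨hs, hy⟩
  have hty : (t, y) ∈ (Icc (0 : ℝ) 1) ×ˢ closedBall x 1 := ⟨ht, hy⟩
  have hd : dist (s, y) (t, y) < δ := by
    rw [Prod.dist_eq]
    simp only [dist_self]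
    rw [max_eq_left dist_nonneg]
    calc dist s t = |s - t| := Real.dist_eq s t
      _ ≤ 1 / (N + 1 : ℕ) := hst
      _ < δ := by exact_mod_cast hNδ
  have hlt := hδ' (s, y) hsy (t, y) hty hd
  simp only at hlt
  set a : ℂ := ((f (s • y) : Circle) : ℂ)
  set b : ℂ := ((f (t • y) : Circle) : ℂ)
  have hb : ‖b‖ = 1 := Circle.norm_coe _
  have hab : ‖a - b‖ < 1 := by rwa [Complex.dist_eq] at hlt
  have key : ‖a / b - 1‖ < 1 := by
    have hb0 : b ≠ 0 := Circle.coe_ne_zero _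
    have : a / b - 1 = (a - b) / b := by field_simp
    rw [this, norm_div, hb, div_one]
    exact hab
  have : 0 < (a / b).re := by
    have h1 : (1 - a / b).re ≤ ‖1 - a / b‖ := Complex.re_le_norm _
    have h2 : ‖1 - a / b‖ = ‖a / b - 1‖ := by
      rw [show (1 : ℂ) - a / b = -(a / b - 1) from by ring, norm_neg]
    have h3 : (1 - a / b).re = 1 - (a / b).re := by simp [Complex.sub_re]
    rw [h2, h3] at h1
    linarith [key]
  rwa [Circle.coe_div]

lemma continuousOn_argSum {f : E → Circle} (hf : Continuous f) {N : ℕ} (hN : N ≠ 0)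
    {U : Set E} (hU : IsOpen U) (hg : ∀ y ∈ U, Good f N y) :
    ∀ y ∈ U, ContinuousAt (argSum f N) y := by
  intro y hy
  have hNR : (0 : ℝ) < N := by exact_mod_cast Nat.pos_of_ne_zero hN
  apply ContinuousAt.congr (f := fun z => ∑ k ∈ Finset.range N,
    Complex.arg ((f ((((k : ℝ) + 1) / (N : ℝ)) • z) / f (((k : ℝ) / (N : ℝ)) • z) : Circle) : ℂ))
  swap
  · filter_upwards [hU.mem_nhds hy] with z _
    rfl
  apply tendsto_finset_sum
  intro k hk
  rw [Finset.mem_range] at hk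
  have hkN : ((k : ℝ) + 1) / N ∈ Icc (0 : ℝ) 1 := by
    constructor
    · positivity
    · rw [div_le_one hNR]
      exact_mod_cast hk
  have hkN' : (k : ℝ) / N ∈ Icc (0 : ℝ) 1 := by
    constructor
    · positivity
    · rw [div_le_one hNR]
      have : (k : ℝ) ≤ N := by
        have : (k : ℝ) < N := by exact_mod_cast hk
        linarith
      exact this
  have hgapk : |((k : ℝ) + 1) / N - (k : ℝ) / N| ≤ 1 / N := by
    rw [div_sub_div_same]
    have : (k : ℝ) + 1 - k = 1 := by ring
    rw [this, abs_of_pos (by positivity)]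
  have hre : 0 < ((f ((((k : ℝ) + 1) / (N : ℝ)) • y) /
      f (((k : ℝ) / (N : ℝ)) • y) : Circle) : ℂ).re := hg y hy _ _ hkN hkN' hgapk
  have hq : ContinuousAt (fun z : E =>
      ((f ((((k : ℝ) + 1) / (N : ℝ)) • z) / f (((k : ℝ) / (N : ℝ)) • z) : Circle) : ℂ)) y := by
    apply Continuous.continuousAt
    apply continuous_subtype_val.comp
    exact (hf.comp (continuous_const_smul _)).div' (hf.comp (continuous_const_smul _))
  have hcomp : ContinuousAt (Complex.arg ∘ fun z : E =>
      ((f ((((k : ℝ) + 1) / (N : ℝ)) • z) / f (((k : ℝ) / (N : ℝ)) • z) : Circle) : ℂ)) y :=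
    ContinuousAt.comp (Complex.continuousAt_arg (Or.inl hre)) hq
  exact hcomp


/-- Every continuous circle-valued map on a proper real normed space has a continuous
real logarithm.  (`E` is starlike about `0`, so simply connected.) -/
lemma exists_lift [ProperSpace E] {f : E → Circle} (hf : Continuous f) :
    ∃ g : E → ℝ, Continuous g ∧ ∀ x, Circle.exp (g x) = f x := by
  choose N hN0 hNg using exists_good hf
  refine ⟨fun x => argSum f (N x) x + Complex.arg ((f 0 : Circle) : ℂ), ?_, ?_⟩
  · rw [continuous_iff_continuousAt]
    intro x
    apply ContinuousAt.add _ continuousAt_const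
    have hloc : ∀ y ∈ ball x 1, argSum f (N y) y = argSum f (N x) y := by
      intro y hy
      have h1 : Good f (N x) y := hNg x y (ball_subset_closedBall hy)
      have h2 : Good f (N y) y := hNg y y (mem_closedBall_self zero_le_one)
      calc argSum f (N y) y = argSum f (N y * N x) y :=
            (argSum_mul f (hN0 y) (hN0 x) h2).symm
        _ = argSum f (N x * N y) y := by rw [mul_comm]
        _ = argSum f (N x) y := argSum_mul f (hN0 x) (hN0 y) h1
    have hCA : ContinuousAt (argSum f (N x)) x :=
      continuousOn_argSum hf (hN0 x) isOpen_ball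
        (fun y hy => hNg x y (ball_subset_closedBall hy)) x (mem_ball_self one_pos)
    apply hCA.congr
    filter_upwards [isOpen_ball.mem_nhds (mem_ball_self one_pos)] with y hy
    exact (hloc y hy).symm
  · intro x
    rw [Circle.exp_add, exp_argSum f (hN0 x) x, Circle.exp_arg]
    simp


/-- A continuous function whose `Circle.exp` is identically `1` on a preconnected set
is constant there. -/
lemma const_of_exp_eq_one {X : Type*} [TopologicalSpace X] {S : Set ℝ}
    (hS : IsPreconnected S) (hmem : ∀ r ∈ S, Circle.exp r = 1) :
    ∀ a ∈ S, ∀ b ∈ S, a = b := by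
  intro a ha b hb
  by_contra hne
  wlog hab : a < b generalizing a b
  · exact this b hb a ha (Ne.symm hne) (lt_of_le_of_ne (not_lt.1 hab) (Ne.symm hne))
  obtain ⟨m, hm⟩ := Circle.exp_eq_one.1 (hmem a ha)
  obtain ⟨m', hm'⟩ := Circle.exp_eq_one.1 (hmem b hb)
  have hπ := Real.pi_pos
  have hmm : (m : ℝ) < m' := by
    rw [hm, hm'] at hab
    have h2 : (0 : ℝ) < 2 * π := by linarith
    nlinarith
  have hmm' : m + 1 ≤ m' := by exact_mod_cast Int.add_one_le_iff.2 (by exact_mod_cast hmm)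
  have hmid : a + π ∈ Set.Icc a b := by
    constructor
    · linarith
    · have : (m : ℝ) + 1 ≤ m' := by exact_mod_cast hmm'
      rw [hm, hm']
      nlinarith
  have hmem2 : a + π ∈ S := hS.ordConnected.out ha hb hmid
  obtain ⟨k, hk⟩ := Circle.exp_eq_one.1 (hmem _ hmem2)
  rw [hm] at hk
  have : (2 * m + 1 : ℝ) = 2 * k := by
    have : π * (2 * m + 1) = π * (2 * k) := by linarith [hk]
    exact mul_left_cancel₀ (ne_of_gt hπ) this
  have : (2 * m + 1 : ℤ) = 2 * k := by exact_mod_cast this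
  omega

end

end Stmt14Aux

/-- A bounded domain in ℝⁿ (n ≥ 2) with connected complement has connected
boundary (this follows from `H₁(ℝⁿ; ℤ) = 0` via Mayer–Vietoris). -/
theorem stmt_14 {n : ℕ} (hn : 2 ≤ n) (Ω : Set (EuclideanSpace ℝ (Fin n)))
    (hΩo : IsOpen Ω) (hΩne : Ω.Nonempty) (hΩconn : IsConnected Ω)
    (hΩb : Bornology.IsBounded Ω) (hc : IsConnected Ωᶜ) :
    IsConnected (frontier Ω) := by
  classical
  haveI : PathConnectedSpace (EuclideanSpace ℝ (Fin n)) :=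
    IsTopologicalAddGroup.pathConnectedSpace
  -- the frontier is nonempty
  have hfne : (frontier Ω).Nonempty := by
    rw [Set.nonempty_iff_ne_empty]
    intro h
    have hclopen : IsClopen Ω := isClopen_iff_frontier_eq_empty.2 h
    rcases isClopen_iff.1 hclopen with h0 | h1
    · exact hΩne.ne_empty h0
    · rcases hc.nonempty with ⟨x, hx⟩
      rw [h1] at hx
      exact hx (Set.mem_univ x)
  refine ⟨hfne, ?_⟩
  by_contra hnc
  rw [IsPreconnected] at hnc
  push_neg at hnc
  obtain ⟨u, v, hu, hv, hSuv, hSu, hSv, hdisj⟩ := hnc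
  set S := frontier Ω with hS
  set F₁ : Set (EuclideanSpace ℝ (Fin n)) := S \ u with hF₁
  set F₂ : Set (EuclideanSpace ℝ (Fin n)) := S \ v with hF₂
  have hScl : IsClosed S := isClosed_frontier
  have hF₁c : IsClosed F₁ := hScl.sdiff hu
  have hF₂c : IsClosed F₂ := hScl.sdiff hv
  have hF₁ne : F₁.Nonempty := by
    obtain ⟨y, hyS, hyv⟩ := hSv
    refine ⟨y, hyS, fun hyu => ?_⟩
    have : y ∈ S ∩ (u ∩ v) := ⟨hyS, hyu, hyv⟩
    rw [hdisj] at this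
    exact this
  have hF₂ne : F₂.Nonempty := by
    obtain ⟨y, hyS, hyu⟩ := hSu
    refine ⟨y, hyS, fun hyv => ?_⟩
    have : y ∈ S ∩ (u ∩ v) := ⟨hyS, hyu, hyv⟩
    rw [hdisj] at this
    exact this
  have hunion : F₁ ∪ F₂ = S := by
    ext z
    constructor
    · rintro (⟨h, _⟩ | ⟨h, _⟩) <;> exact h
    · intro hz
      rcases hSuv hz with hzu | hzv
      · right
        refine ⟨hz, fun hzv => ?_⟩
        have : z ∈ S ∩ (u ∩ v) := ⟨hz, hzu, hzv⟩
        rw [hdisj] at this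
        exact this
      · left
        refine ⟨hz, fun hzu => ?_⟩
        have : z ∈ S ∩ (u ∩ v) := ⟨hz, hzu, hzv⟩
        rw [hdisj] at this
        exact this
  have hFdisj : ∀ z, z ∈ F₁ → z ∈ F₂ → False := by
    intro z h1 h2
    rcases hSuv h1.1 with h | h
    · exact h2.2 ((hSuv h1.1).resolve_left h1.2)
    · exact h1.2 ((hSuv h1.1).resolve_right h2.2)
  -- the Urysohn-type function
  set d₁ : EuclideanSpace ℝ (Fin n) → ℝ := fun z => Metric.infDist z F₁ with hd₁
  set d₂ : EuclideanSpace ℝ (Fin n) → ℝ := fun z => Metric.infDist z F₂ with hd₂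
  have hden : ∀ z, 0 < d₁ z + d₂ z := by
    intro z
    by_cases hz : z ∈ F₁
    · have : 0 < d₂ z := (hF₂c.notMem_iff_infDist_pos hF₂ne).1 (fun h => hFdisj z hz h)
      have h0 : 0 ≤ d₁ z := Metric.infDist_nonneg
      linarith
    · have : 0 < d₁ z := (hF₁c.notMem_iff_infDist_pos hF₁ne).1 hz
      have h0 : 0 ≤ d₂ z := Metric.infDist_nonneg
      linarith
  set w : EuclideanSpace ℝ (Fin n) → ℝ := fun z => d₁ z / (d₁ z + d₂ z) with hw
  have hwc : Continuous w := by
    apply Continuous.div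
    · exact Metric.continuous_infDist_pt F₁
    · exact (Metric.continuous_infDist_pt F₁).add (Metric.continuous_infDist_pt F₂)
    · exact fun z => ne_of_gt (hden z)
  have hw1 : ∀ z ∈ F₁, w z = 0 := by
    intro z hz
    simp only [hw, hd₁]
    rw [Metric.infDist_zero_of_mem hz]
    simp
  have hw2 : ∀ z ∈ F₂, w z = 1 := by
    intro z hz
    have h2 : d₂ z = 0 := Metric.infDist_zero_of_mem hz
    have h1 : 0 < d₁ z := (hF₁c.notMem_iff_infDist_pos hF₁ne).1 (fun h => hFdisj z h hz)
    simp only [hw]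
    rw [h2, add_zero, div_self (ne_of_gt h1)]
  -- the Eilenberg function
  set f : EuclideanSpace ℝ (Fin n) → Circle := fun z =>
    if z ∈ closure Ω then Circle.exp (Real.pi * w z) else Circle.exp (-(Real.pi * w z)) with hf
  have hfrc : ∀ z ∈ frontier Ω, Circle.exp (Real.pi * w z) = Circle.exp (-(Real.pi * w z)) := by
    intro z hz
    rw [← hS, ← hunion] at hz
    rcases hz with hz | hz
    · rw [hw1 z hz]
      norm_num
    · rw [hw2 z hz, mul_one]
      rw [Circle.exp_eq_exp]
      exact ⟨1, by ring⟩
  have hfc : Continuous f := by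
    apply Continuous.if
    · intro a ha
      exact hfrc a (frontier_closure_subset ha)
    · exact Circle.exp.continuous.comp (continuous_const.mul hwc)
    · exact Circle.exp.continuous.comp ((continuous_const.mul hwc).neg)
  obtain ⟨g, hgc, hgf⟩ := Stmt14Aux.exists_lift hfc
  -- on the closure of Ω
  have hA : ∀ z ∈ closure Ω, Circle.exp (g z - Real.pi * w z) = 1 := by
    intro z hz
    rw [Circle.exp_sub, hgf z]
    have : f z = Circle.exp (Real.pi * w z) := by rw [hf]; exact if_pos hz
    rw [this, div_self']
  -- on the complement of Ω
  have hB : ∀ z ∈ Ωᶜ, Circle.exp (g z + Real.pi * w z) = 1 := by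
    intro z hz
    rw [Circle.exp_add, hgf z]
    by_cases hcl : z ∈ closure Ω
    · have hzfr : z ∈ frontier Ω := by
        rw [hΩo.frontier_eq]
        exact ⟨hcl, hz⟩
      have hfz : f z = Circle.exp (Real.pi * w z) := by rw [hf]; exact if_pos hcl
      rw [hfz, ← Circle.exp_add]
      rw [← hS, ← hunion] at hzfr
      rcases hzfr with h | h
      · rw [hw1 z h]
        norm_num
      · rw [hw2 z h, mul_one]
        rw [show Real.pi + Real.pi = 2 * Real.pi by ring]
        exact Circle.exp_two_pi
    · have hfz : f z = Circle.exp (-(Real.pi * w z)) := by rw [hf]; exact if_neg hcl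
      rw [hfz, ← Circle.exp_add]
      norm_num
  -- conclude
  obtain ⟨x₁, hx₁⟩ := hF₁ne
  obtain ⟨x₂, hx₂⟩ := hF₂ne
  have hx₁S : x₁ ∈ S := hx₁.1
  have hx₂S : x₂ ∈ S := hx₂.1
  have hfr_cl : S ⊆ closure Ω := frontier_subset_closure
  have hfr_co : S ⊆ Ωᶜ := by
    rw [hS, hΩo.frontier_eq]
    exact fun z hz => hz.2
  have hconnA : IsPreconnected ((fun z => g z - Real.pi * w z) '' closure Ω) :=
    (hΩconn.isPreconnected.closure).image _ (hgc.sub (continuous_const.mul hwc)).continuousOn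
  have hconnB : IsPreconnected ((fun z => g z + Real.pi * w z) '' Ωᶜ) :=
    hc.isPreconnected.image _ (hgc.add (continuous_const.mul hwc)).continuousOn
  have e1 : g x₁ - Real.pi * w x₁ = g x₂ - Real.pi * w x₂ := by
    apply Stmt14Aux.const_of_exp_eq_one (X := ℕ) hconnA
    · rintro r ⟨z, hz, rfl⟩
      exact hA z hz
    · exact ⟨x₁, hfr_cl hx₁S, rfl⟩
    · exact ⟨x₂, hfr_cl hx₂S, rfl⟩
  have e2 : g x₁ + Real.pi * w x₁ = g x₂ + Real.pi * w x₂ := by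
    apply Stmt14Aux.const_of_exp_eq_one (X := ℕ) hconnB
    · rintro r ⟨z, hz, rfl⟩
      exact hB z hz
    · exact ⟨x₁, hfr_co hx₁S, rfl⟩
    · exact ⟨x₂, hfr_co hx₂S, rfl⟩
  rw [hw1 x₁ hx₁, hw2 x₂ hx₂] at e1 e2
  have := Real.pi_pos
  simp only [mul_zero, mul_one, sub_zero, add_zero] at e1 e2
  linarith
end

section
/- For a nonzero complex number a and real symmetric data arising from the Levi form: if H is a Hermitian positive definite n×n matrix and S is a complex symmetric n×n matrix, then the real quadratic form q(v) = Re(vᵀ S v) + v* H v on ℂ^n ≅ ℝ^{2n} is positive definite on a real subspace of dimension at least n; equivalently, q cannot be negative semidefinite on any real subspace of dimension > n. -/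
/-!
Diagonalising `q` in a `q`-orthogonal basis splits `ℂⁿ ≅ ℝ²ⁿ` into complementary subspaces on
which `q` is positive definite, resp. nonpositive. Since `q v + q (i • v) = 2 Re (v* H v) > 0` for
`v ≠ 0`, a subspace `W` on which `q ≤ 0` meets `i • W` only in `0`, so `dim W ≤ n`; hence the
positive definite part has dimension at least `n`.
-/

open scoped ComplexOrder

open Module Matrix

namespace QuadraticMap

variable {K V ι : Type*} [Field K] [LinearOrder K] [IsStrictOrderedRing K]
  [AddCommGroup V] [Module K V] [Fintype ι]

theorem apply_eq_sum_of_iIsOrtho (Q : QuadraticForm K V) {v : Basis ι K V}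
    (hv : (associated (R := K) Q).IsOrthoᵢ v) (x : V) :
    Q x = ∑ i, Q (v i) * (v.repr x i * v.repr x i) := by
  have := congrArg (· (v.equivFun x)) (Q.basisRepr_eq_of_iIsOrtho v hv)
  simpa [QuadraticMap.basisRepr, v.equivFun_symm_apply, v.sum_repr] using this

variable {Q : QuadraticForm K V} {v : Basis ι K V}

theorem apply_pos_of_mem_span_pos (hv : (associated (R := K) Q).IsOrthoᵢ v) {x : V}
    (hx : x ∈ Submodule.span K (v '' {i | 0 < Q (v i)})) (hx0 : x ≠ 0) : 0 < Q x := by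
  have hsupp := v.mem_span_image.mp hx
  obtain ⟨j, hj⟩ : ∃ j, v.repr x j ≠ 0 := by
    by_contra! h
    exact hx0 (v.ext_elem_iff.mpr (by simpa using h))
  rw [Q.apply_eq_sum_of_iIsOrtho hv]
  refine Finset.sum_pos' (fun i _ => ?_) ⟨j, Finset.mem_univ j, ?_⟩
  · by_cases hi : v.repr x i = 0
    · simp [hi]
    · exact mul_nonneg (hsupp (by simpa using hi)).le (mul_self_nonneg _)
  · exact mul_pos (hsupp (by simpa using hj)) (mul_self_pos.mpr hj)

theorem apply_nonpos_of_mem_span_nonpos (hv : (associated (R := K) Q).IsOrthoᵢ v) {x : V}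
    (hx : x ∈ Submodule.span K (v '' {i | Q (v i) ≤ 0})) : Q x ≤ 0 := by
  have hsupp := v.mem_span_image.mp hx
  rw [Q.apply_eq_sum_of_iIsOrtho hv]
  refine Finset.sum_nonpos fun i _ => ?_
  by_cases hi : v.repr x i = 0
  · simp [hi]
  · exact mul_nonpos_of_nonpos_of_nonneg (hsupp (by simpa using hi)) (mul_self_nonneg _)

theorem exists_isCompl_pos_nonpos [FiniteDimensional K V] (Q : QuadraticForm K V) :
    ∃ P N : Submodule K V, IsCompl P N ∧ (∀ x ∈ P, x ≠ 0 → 0 < Q x) ∧ ∀ x ∈ N, Q x ≤ 0 := by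
  obtain ⟨v, hv⟩ :=
    LinearMap.BilinForm.exists_orthogonal_basis (QuadraticForm.associated_isSymm K Q)
  let s : Set (Fin (finrank K V)) := {i | 0 < Q (v i)}
  have hsc : sᶜ = {i | Q (v i) ≤ 0} := by ext; simp [s]
  refine ⟨Submodule.span K (v '' s), Submodule.span K (v '' sᶜ), ⟨?_, ?_⟩,
    fun _ hx => apply_pos_of_mem_span_pos hv hx,
    fun _ hx => apply_nonpos_of_mem_span_nonpos hv (hsc ▸ hx)⟩
  · exact v.linearIndependent.disjoint_span_image disjoint_compl_right
  · rw [codisjoint_iff, ← Submodule.span_union, ← Set.image_union, Set.union_compl_self,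
      Set.image_univ, v.span_eq]

end QuadraticMap

theorem Submodule.two_mul_finrank_le_of_add_pos {K V : Type*} [Field K] [LinearOrder K]
    [IsOrderedAddMonoid K] [AddCommGroup V] [Module K V] [FiniteDimensional K V] {Q : V → K}
    (J : V ≃ₗ[K] V)
    (hJ : ∀ x ≠ 0, 0 < Q x + Q (J x)) {W : Submodule K V} (hW : ∀ x ∈ W, Q x ≤ 0) :
    2 * finrank K W ≤ finrank K V := by
  have hdisj : W ⊓ W.map (J : V →ₗ[K] V) = ⊥ := by
    refine (Submodule.eq_bot_iff _).mpr fun y ⟨hyW, hyJ⟩ => ?_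
    obtain ⟨x, hxW, rfl⟩ := Submodule.mem_map.mp hyJ
    by_contra hy
    have hx : x ≠ 0 := by rintro rfl; simp at hy
    exact (hJ x hx).not_ge (add_nonpos (hW x hxW) (hW _ hyW))
  have := Submodule.finrank_sup_add_finrank_inf_eq W (W.map (J : V →ₗ[K] V))
  rw [hdisj, finrank_bot, LinearEquiv.finrank_map_eq] at this
  have := Submodule.finrank_le (W ⊔ W.map (J : V →ₗ[K] V))
  omega

namespace Matrix

variable {ι : Type*} [Fintype ι]

noncomputable def hessianForm (H S : Matrix ι ι ℂ) : QuadraticForm ℝ (ι → ℂ) :=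
  LinearMap.BilinMap.toQuadraticMap <|
    LinearMap.mk₂ ℝ (fun v w => (v ⬝ᵥ S *ᵥ w).re + (star v ⬝ᵥ H *ᵥ w).re)
      (fun v v' w => by simp only [add_dotProduct, star_add, Complex.add_re]; ring)
      (fun c v w => by
        simp only [← Complex.coe_smul, star_smul, smul_dotProduct, Complex.star_def,
          Complex.conj_ofReal, smul_eq_mul, Complex.re_ofReal_mul]; ring)
      (fun v w w' => by simp only [mulVec_add, dotProduct_add, Complex.add_re]; ring)
      (fun c v w => by
        simp only [← Complex.coe_smul, mulVec_smul, dotProduct_smul, smul_eq_mul,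
          Complex.re_ofReal_mul]; ring)

theorem hessianForm_apply (H S : Matrix ι ι ℂ) (v : ι → ℂ) :
    hessianForm H S v = (v ⬝ᵥ S *ᵥ v).re + (star v ⬝ᵥ H *ᵥ v).re := rfl

theorem hessianForm_add_hessianForm_I_smul (H S : Matrix ι ι ℂ) (v : ι → ℂ) :
    hessianForm H S v + hessianForm H S (Complex.I • v) = 2 * (star v ⬝ᵥ H *ᵥ v).re := by
  simp only [hessianForm_apply, star_smul, smul_dotProduct, mulVec_smul, dotProduct_smul,
    Complex.star_def, Complex.conj_I, smul_eq_mul, neg_mul, mul_neg, ← mul_assoc,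
    Complex.I_mul_I, neg_neg, one_mul, Complex.neg_re]
  ring

theorem hessianForm_add_hessianForm_I_smul_pos {H : Matrix ι ι ℂ} (hH : H.PosDef)
    (S : Matrix ι ι ℂ) {v : ι → ℂ} (hv : v ≠ 0) :
    0 < hessianForm H S v + hessianForm H S (Complex.I • v) := by
  rw [hessianForm_add_hessianForm_I_smul]
  exact mul_pos two_pos (hH.re_dotProduct_pos hv)

end Matrix

theorem stmt_19_general {n : ℕ} (H S : Matrix (Fin n) (Fin n) ℂ)
    (hH : H.PosDef) :
    (∃ W : Submodule ℝ (Fin n → ℂ), n ≤ Module.finrank ℝ W ∧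
      ∀ v ∈ W, v ≠ 0 →
        0 < (dotProduct v (S.mulVec v)).re +
            (dotProduct (star v) (H.mulVec v)).re) ∧
    (∀ W : Submodule ℝ (Fin n → ℂ), n < Module.finrank ℝ W →
      ¬ (∀ v ∈ W,
        (dotProduct v (S.mulVec v)).re +
          (dotProduct (star v) (H.mulVec v)).re ≤ 0)) := by
  let J := (LinearEquiv.smulOfNeZero ℂ (Fin n → ℂ) _ Complex.I_ne_zero).restrictScalars ℝ
  have hdim : finrank ℝ (Fin n → ℂ) = 2 * n := by
    simp [Module.finrank_pi_fintype, Complex.finrank_real_complex, mul_comm]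
  have hnonpos (W : Submodule ℝ (Fin n → ℂ)) (hW : ∀ v ∈ W, hessianForm H S v ≤ 0) :
      finrank ℝ W ≤ n := by
    have := Submodule.two_mul_finrank_le_of_add_pos (Q := hessianForm H S) J
      (fun _ hv => hessianForm_add_hessianForm_I_smul_pos hH S hv) hW
    omega
  obtain ⟨P, N, hPN, hP, hN⟩ := (hessianForm H S).exists_isCompl_pos_nonpos
  have hPN_dim := Submodule.finrank_add_eq_of_isCompl hPN
  refine ⟨⟨P, by have := hnonpos N hN; omega, hP⟩, fun W hW hle => ?_⟩
  have := hnonpos W hle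
  omega

/-- Linear-algebra core of the bound on the Morse index of a strictly
plurisubharmonic function: if `H` is a positive definite Hermitian matrix and
`S` a complex symmetric matrix, the real quadratic form
`q v = Re(vᵀ S v) + Re(v* H v)` on ℂⁿ ≅ ℝ²ⁿ is positive definite on some real
subspace of dimension at least `n`, and is not negative semidefinite on any
real subspace of dimension greater than `n`. -/
theorem stmt_19 {n : ℕ} (H S : Matrix (Fin n) (Fin n) ℂ)
    (hH : H.PosDef) (hS : S.IsSymm) :
    (∃ W : Submodule ℝ (Fin n → ℂ), n ≤ Module.finrank ℝ W ∧
      ∀ v ∈ W, v ≠ 0 →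
        0 < (dotProduct v (S.mulVec v)).re +
            (dotProduct (star v) (H.mulVec v)).re) ∧
    (∀ W : Submodule ℝ (Fin n → ℂ), n < Module.finrank ℝ W →
      ¬ (∀ v ∈ W,
        (dotProduct v (S.mulVec v)).re +
          (dotProduct (star v) (H.mulVec v)).re ≤ 0)) :=
  stmt_19_general H S hH
end
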